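/- Let u : ℝ → ℝ be twice differentiable with u and u'' bounded on ℝ, and let x ∈ ℝ be a point at which u'' is continuous. Then the limit as α → 2⁻ of c_{1,α} ∫_0^∞ δ²u(x,ξ) ξ^{−(1+α)} dξ equals u''(x). In particular, the fractional Laplacian −c_{1,α} ∫_0^∞ δ²u(x,ξ) ξ^{−(1+α)} dξ converges to −u''(x) as α → 2⁻. -/

import Mathlib

/-!
Write `δ²u(x,ξ) = u(x+ξ) - 2u(x) + u(x-ξ)`. Continuity of `u''` at `x` gives
`δ²u(x,ξ) = u''(x) ξ² + o(ξ²)` as `ξ → 0⁺`, while `δ²u` is bounded by `4 sup |u|`.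
Against the weight `(2-α) ξ^{-(1+α)}` the part `u''(x) ξ²` on `(0, δ]` contributes
`u''(x) δ^{2-α} → u''(x)`, the `o(ξ²)` error contributes at most `ε δ^{2-α}`, and the tail on
`(δ, ∞)` is `O((2-α) δ^{-α}/α) → 0`. Finally `c_{1,α} ~ 2 - α` as `α → 2`, because
`Γ(1 - α/2) = Γ(2 - α/2) / (1 - α/2)`.
-/

open MeasureTheory Set Filter

/-- The one-dimensional normalization constant
`c_{1,α} = 2^{α−1} α Γ((1+α)/2) / (√π Γ(1 − α/2))` of the fractional Laplacian. -/
noncomputable def fracLapConst (α : ℝ) : ℝ :=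
  2 ^ (α - 1) * α * Real.Gamma ((1 + α) / 2) / (Real.sqrt Real.pi * Real.Gamma (1 - α / 2))

open Topology Real Asymptotics

theorem Real.continuousAt_Gamma_of_pos {s : ℝ} (hs : 0 < s) : ContinuousAt Gamma s :=
  (differentiableAt_Gamma fun m => by linarith [(Nat.cast_nonneg m : (0:ℝ) ≤ m)]).continuousAt

theorem fracLapConst_eq_two_sub_mul {α : ℝ} (hα : α ≠ 2) :
    fracLapConst α = (2 - α) *
      (2 ^ (α - 2) * α * Gamma ((1 + α) / 2) / (√π * Gamma (2 - α / 2))) := by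
  have hs : 1 - α / 2 ≠ 0 := fun h => hα (by linarith)
  rw [fracLapConst, show 2 - α / 2 = (1 - α / 2) + 1 by ring, Gamma_add_one hs,
    show α - 1 = (α - 2) + 1 by ring, rpow_add_one two_ne_zero]
  rcases eq_or_ne (Gamma (1 - α / 2)) 0 with hΓ | hΓ
  · -- at a pole, `Gamma` takes the junk value `0` and both sides vanish
    simp [hΓ]
  · field_simp

theorem tendsto_fracLapConst_div_two_sub :
    Tendsto (fun α => fracLapConst α / (2 - α)) (𝓝[≠] 2) (𝓝 1) := by
  have hcont : ContinuousAt (fun α : ℝ =>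
      2 ^ (α - 2) * α * Gamma ((1 + α) / 2) / (√π * Gamma (2 - α / 2))) 2 := by
    have h1 : ContinuousAt (fun α : ℝ => Gamma ((1 + α) / 2)) 2 :=
      (continuousAt_Gamma_of_pos (s := (1 + 2) / 2) (by norm_num)).comp
        (f := fun α : ℝ => (1 + α) / 2) (by fun_prop)
    have h2 : ContinuousAt (fun α : ℝ => Gamma (2 - α / 2)) 2 :=
      (continuousAt_Gamma_of_pos (s := 2 - 2 / 2) (by norm_num)).comp
        (f := fun α : ℝ => 2 - α / 2) (by fun_prop)
    have h0 : ContinuousAt (fun α : ℝ => (2:ℝ) ^ (α - 2)) 2 :=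
      (continuousAt_const_rpow two_ne_zero).comp (by fun_prop)
    exact ((h0.mul continuousAt_id).mul h1).div (h2.const_mul _)
      (by norm_num [(sqrt_pos.2 pi_pos).ne'])
  have hval : 2 ^ ((2:ℝ) - 2) * 2 * Gamma ((1 + 2) / 2) / (√π * Gamma (2 - 2 / 2)) = 1 := by
    have h := Gamma_nat_add_one_add_half 0
    norm_num at h
    norm_num [h]
    field_simp
  refine (hval ▸ hcont.tendsto.mono_left nhdsWithin_le_nhds).congr' ?_
  filter_upwards [self_mem_nhdsWithin] with α hα
  rw [fracLapConst_eq_two_sub_mul hα, mul_div_cancel_left₀ _ (sub_ne_zero.2 (Ne.symm hα))]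

theorem norm_le_half_mul_sq_of_norm_deriv2_le {E : Type*} [NormedAddCommGroup E]
    [NormedSpace ℝ E] {g g' g'' : ℝ → E} {b M : ℝ}
    (hg : ∀ t ∈ Icc 0 b, HasDerivAt g (g' t) t) (hg' : ∀ t ∈ Icc 0 b, HasDerivAt g' (g'' t) t)
    (h0 : g 0 = 0) (h0' : g' 0 = 0) (hM : ∀ t ∈ Ico 0 b, ‖g'' t‖ ≤ M) :
    ∀ t ∈ Icc 0 b, ‖g t‖ ≤ M / 2 * t ^ 2 := by
  have hcont {f f' : ℝ → E} (hf : ∀ t ∈ Icc 0 b, HasDerivAt f (f' t) t) :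
      ContinuousOn f (Icc 0 b) := fun t ht => (hf t ht).continuousAt.continuousWithinAt
  have hright {f f' : ℝ → E} (hf : ∀ t ∈ Icc 0 b, HasDerivAt f (f' t) t) :
      ∀ t ∈ Ico 0 b, HasDerivWithinAt f (f' t) (Ici t) t :=
    fun t ht => (hf t (Ico_subset_Icc_self ht)).hasDerivWithinAt
  have hg'_le : ∀ t ∈ Icc 0 b, ‖g' t‖ ≤ M * t :=
    image_norm_le_of_norm_deriv_right_le_deriv_boundary (hcont hg') (hright hg')
      (by simp [h0']) (fun t => by simpa using (hasDerivAt_id t).const_mul M) hM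
  refine image_norm_le_of_norm_deriv_right_le_deriv_boundary (hcont hg) (hright hg)
    (by simp [h0]) (fun t => ?_) (fun t ht => hg'_le t (Ico_subset_Icc_self ht))
  exact ((hasDerivAt_pow 2 t).const_mul (M / 2)).congr_deriv (by norm_num; ring)

def secondCentralDiff (u : ℝ → ℝ) (x ξ : ℝ) : ℝ :=
  u (x + ξ) - 2 * u x + u (x - ξ)

theorem abs_secondCentralDiff_sub_mul_sq_le {u u' u'' : ℝ → ℝ}
    (hd1 : ∀ y, HasDerivAt u (u' y) y) (hd2 : ∀ y, HasDerivAt u' (u'' y) y)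
    {x ξ L C : ℝ} (hξ : 0 ≤ ξ) (hC : ∀ s, |s| ≤ ξ → |u'' (x + s) - L| ≤ C) :
    |secondCentralDiff u x ξ - L * ξ ^ 2| ≤ C * ξ ^ 2 := by
  have hg (t : ℝ) : HasDerivAt (fun t => u (x + t) - 2 * u x + u (x - t) - L * t ^ 2)
      (u' (x + t) - u' (x - t) - L * (2 * t)) t :=
    (((((hd1 (x + t)).comp_const_add x t).sub_const (2 * u x)).fun_add
      ((hd1 (x - t)).comp_const_sub x t)).fun_sub
      ((hasDerivAt_pow 2 t).const_mul L)).congr_deriv (by norm_num; ring)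
  have hg' (t : ℝ) : HasDerivAt (fun t => u' (x + t) - u' (x - t) - L * (2 * t))
      (u'' (x + t) + u'' (x - t) - 2 * L) t :=
    ((((hd2 (x + t)).comp_const_add x t).fun_sub
      ((hd2 (x - t)).comp_const_sub x t)).fun_sub
      (((hasDerivAt_id t).const_mul 2).const_mul L)).congr_deriv (by ring)
  have hM : ∀ t ∈ Ico 0 ξ, ‖u'' (x + t) + u'' (x - t) - 2 * L‖ ≤ 2 * C := by
    intro t ht
    have h₁ := hC t (by rw [abs_of_nonneg ht.1]; exact ht.2.le)
    have h₂ := hC (-t) (by rw [abs_neg, abs_of_nonneg ht.1]; exact ht.2.le)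
    rw [← sub_eq_add_neg] at h₂
    calc ‖u'' (x + t) + u'' (x - t) - 2 * L‖ = |(u'' (x + t) - L) + (u'' (x - t) - L)| := by
          rw [Real.norm_eq_abs]; ring_nf
      _ ≤ 2 * C := by linarith [abs_add_le (u'' (x + t) - L) (u'' (x - t) - L)]
  have := norm_le_half_mul_sq_of_norm_deriv2_le (fun t _ => hg t) (fun t _ => hg' t)
    (by simp; ring) (by simp) hM ξ ⟨hξ, le_rfl⟩
  simpa [secondCentralDiff] using this

theorem integrableOn_and_abs_setIntegral_le {f g : ℝ → ℝ} {s : Set ℝ} (hs : MeasurableSet s)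
    (hf : AEStronglyMeasurable f (volume.restrict s)) (hg : IntegrableOn g s)
    (hfg : ∀ ξ ∈ s, |f ξ| ≤ g ξ) :
    IntegrableOn f s ∧ |∫ ξ in s, f ξ| ≤ ∫ ξ in s, g ξ := by
  have hfg' : ∀ᵐ ξ ∂volume.restrict s, ‖f ξ‖ ≤ g ξ := (ae_restrict_iff' hs).2 (ae_of_all _ hfg)
  exact ⟨hg.mono' hf hfg', norm_integral_le_of_norm_le hg hfg'⟩

theorem sq_mul_rpow_neg_one_sub {ξ : ℝ} (hξ : 0 < ξ) (α : ℝ) :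
    ξ ^ 2 * ξ ^ (-(1 + α)) = ξ ^ (1 - α) := by
  rw [← rpow_natCast, ← rpow_add hξ]
  norm_num
  ring_nf

theorem integral_Ioc_zero_rpow {δ α : ℝ} (hδ : 0 ≤ δ) (hα : α < 2) :
    ∫ ξ in Ioc 0 δ, ξ ^ (1 - α) = δ ^ (2 - α) / (2 - α) := by
  rw [← intervalIntegral.integral_of_le hδ, integral_rpow (Or.inl (by linarith)),
    zero_rpow (by linarith), show 1 - α + 1 = 2 - α by ring, sub_zero]

theorem integrableOn_and_abs_two_sub_mul_integral_Ioc_sub_le {G : ℝ → ℝ} {L η δ α : ℝ}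
    (hδ : 0 ≤ δ) (hα : α < 2)
    (hG : AEStronglyMeasurable G (volume.restrict (Ioc 0 δ)))
    (hGL : ∀ ξ ∈ Ioc 0 δ, |G ξ - L * ξ ^ 2| ≤ η * ξ ^ 2) :
    IntegrableOn (fun ξ => G ξ * ξ ^ (-(1 + α))) (Ioc 0 δ) ∧
      |(2 - α) * (∫ ξ in Ioc 0 δ, G ξ * ξ ^ (-(1 + α))) - L * δ ^ (2 - α)| ≤
        η * δ ^ (2 - α) := by
  have hpow : IntegrableOn (fun ξ : ℝ => ξ ^ (1 - α)) (Ioc 0 δ) :=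
    (intervalIntegrable_iff_integrableOn_Ioc_of_le hδ).1
      (intervalIntegral.intervalIntegrable_rpow' (by linarith))
  have hsplit : ∀ ξ ∈ Ioc 0 δ, G ξ * ξ ^ (-(1 + α)) =
      L * ξ ^ (1 - α) + (G ξ - L * ξ ^ 2) * ξ ^ (-(1 + α)) := by
    intro ξ hξ
    rw [← sq_mul_rpow_neg_one_sub hξ.1]
    ring
  obtain ⟨hR, hRle⟩ := integrableOn_and_abs_setIntegral_le
    (f := fun ξ => (G ξ - L * ξ ^ 2) * ξ ^ (-(1 + α))) (g := fun ξ => η * ξ ^ (1 - α))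
    measurableSet_Ioc (by fun_prop) (hpow.const_mul η) fun ξ hξ => by
      rw [abs_mul, abs_of_nonneg (rpow_nonneg hξ.1.le _), ← sq_mul_rpow_neg_one_sub hξ.1,
        ← mul_assoc]
      exact mul_le_mul_of_nonneg_right (hGL ξ hξ) (rpow_nonneg hξ.1.le _)
  have hInt : IntegrableOn (fun ξ => G ξ * ξ ^ (-(1 + α))) (Ioc 0 δ) :=
    IntegrableOn.congr_fun ((hpow.const_mul L).add hR) (fun ξ hξ => (hsplit ξ hξ).symm)
      measurableSet_Ioc
  refine ⟨hInt, ?_⟩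
  have hI : ∫ ξ in Ioc 0 δ, G ξ * ξ ^ (-(1 + α)) = ∫ ξ in Ioc 0 δ,
      (L * ξ ^ (1 - α) + (G ξ - L * ξ ^ 2) * ξ ^ (-(1 + α))) :=
    setIntegral_congr_fun measurableSet_Ioc hsplit
  rw [hI, integral_add (hpow.const_mul L) hR,
    integral_const_mul, integral_Ioc_zero_rpow hδ hα]
  rw [integral_const_mul, integral_Ioc_zero_rpow hδ hα] at hRle
  have h2α : 0 < 2 - α := by linarith
  set R := ∫ ξ in Ioc 0 δ, (G ξ - L * ξ ^ 2) * ξ ^ (-(1 + α))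
  calc |(2 - α) * (L * (δ ^ (2 - α) / (2 - α)) + R) - L * δ ^ (2 - α)|
      = |(2 - α) * R| := by
        congr 1
        field_simp
        ring
    _ = (2 - α) * |R| := by rw [abs_mul, abs_of_pos h2α]
    _ ≤ (2 - α) * (η * (δ ^ (2 - α) / (2 - α))) := by gcongr
    _ = η * δ ^ (2 - α) := by field_simp

theorem integrableOn_and_abs_integral_Ioi_mul_rpow_le {G : ℝ → ℝ} {K δ α : ℝ}
    (hδ : 0 < δ) (hα : 0 < α)
    (hG : AEStronglyMeasurable G (volume.restrict (Ioi δ))) (hK : ∀ ξ ∈ Ioi δ, |G ξ| ≤ K) :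
    IntegrableOn (fun ξ => G ξ * ξ ^ (-(1 + α))) (Ioi δ) ∧
      |∫ ξ in Ioi δ, G ξ * ξ ^ (-(1 + α))| ≤ K * (δ ^ (-α) / α) := by
  have hexp : -(1 + α) < -1 := by linarith
  have h := integrableOn_and_abs_setIntegral_le
    (f := fun ξ => G ξ * ξ ^ (-(1 + α))) (g := fun ξ => K * ξ ^ (-(1 + α)))
    measurableSet_Ioi (by fun_prop)
    ((integrableOn_Ioi_rpow_of_lt hexp hδ).const_mul K) fun ξ hξ => by
      have hξ0 : 0 ≤ ξ ^ (-(1 + α)) := rpow_nonneg (hδ.trans hξ).le _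
      rw [abs_mul, abs_of_nonneg hξ0]
      exact mul_le_mul_of_nonneg_right (hK ξ hξ) hξ0
  rwa [integral_const_mul, integral_Ioi_rpow_of_lt hexp hδ, show -(1 + α) + 1 = -α by ring,
    neg_div_neg_eq] at h

theorem tendsto_two_sub_mul_integral_mul_rpow {G : ℝ → ℝ} {L K : ℝ}
    (hmeas : AEStronglyMeasurable G (volume.restrict (Ioi 0))) (hK : ∀ ξ ∈ Ioi 0, |G ξ| ≤ K)
    (hG : (fun ξ => G ξ - L * ξ ^ 2) =o[𝓝[>] 0] fun ξ => ξ ^ 2) :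
    Tendsto (fun α => (2 - α) * ∫ ξ in Ioi 0, G ξ * ξ ^ (-(1 + α))) (𝓝[<] 2) (𝓝 L) := by
  rw [Metric.tendsto_nhds]
  intro ε hε
  obtain ⟨δ, hδ, hnear⟩ : ∃ δ > 0, ∀ ξ ∈ Ioc 0 δ, |G ξ - L * ξ ^ 2| ≤ ε / 2 * ξ ^ 2 := by
    obtain ⟨δ, hδ, hsub⟩ := mem_nhdsGT_iff_exists_Ioc_subset.1 (hG.def (half_pos hε))
    refine ⟨δ, hδ, fun ξ hξ => ?_⟩
    simpa [abs_of_nonneg (sq_nonneg ξ)] using hsub hξ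
  have hE : Tendsto (fun α => ε / 2 * δ ^ (2 - α) + |L| * |δ ^ (2 - α) - 1| +
      (2 - α) * (K * (δ ^ (-α) / α))) (𝓝[<] 2) (𝓝 (ε / 2)) := by
    have hpow : Continuous fun β : ℝ => δ ^ β := continuous_const_rpow hδ.ne'
    have hcont : ContinuousAt (fun α => ε / 2 * δ ^ (2 - α) + |L| * |δ ^ (2 - α) - 1| +
        (2 - α) * (K * (δ ^ (-α) / α))) 2 := by
      fun_prop (disch := norm_num)
    simpa using hcont.tendsto.mono_left nhdsWithin_le_nhds
  filter_upwards [hE.eventually (gt_mem_nhds (half_lt_self hε)), Ioo_mem_nhdsLT two_pos]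
    with α hEα hα
  obtain ⟨hP, hPle⟩ := integrableOn_and_abs_two_sub_mul_integral_Ioc_sub_le (α := α) hδ.le hα.2
    (hmeas.mono_set Ioc_subset_Ioi_self) hnear
  obtain ⟨hQ, hQle⟩ := integrableOn_and_abs_integral_Ioi_mul_rpow_le (α := α) hδ hα.1
    (hmeas.mono_set (Ioi_subset_Ioi hδ.le)) fun ξ hξ => hK ξ (hδ.trans hξ)
  rw [← Ioc_union_Ioi_eq_Ioi hδ.le, setIntegral_union (Ioc_disjoint_Ioi le_rfl) measurableSet_Ioi
    hP hQ, Real.dist_eq]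
  set P := ∫ ξ in Ioc 0 δ, G ξ * ξ ^ (-(1 + α))
  set Q := ∫ ξ in Ioi δ, G ξ * ξ ^ (-(1 + α))
  have h2α : 0 < 2 - α := by linarith [hα.2]
  calc |(2 - α) * (P + Q) - L|
      = |((2 - α) * P - L * δ ^ (2 - α)) + L * (δ ^ (2 - α) - 1) + (2 - α) * Q| := by ring_nf
    _ ≤ |(2 - α) * P - L * δ ^ (2 - α)| + |L * (δ ^ (2 - α) - 1)| + |(2 - α) * Q| :=
        abs_add_three _ _ _
    _ ≤ ε / 2 * δ ^ (2 - α) + |L| * |δ ^ (2 - α) - 1| + (2 - α) * (K * (δ ^ (-α) / α)) := by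
        rw [abs_mul, abs_mul, abs_of_pos h2α]
        gcongr
    _ < ε := hEα

theorem isLittleO_secondCentralDiff_sub_mul_sq {u u' u'' : ℝ → ℝ}
    (hd1 : ∀ y, HasDerivAt u (u' y) y) (hd2 : ∀ y, HasDerivAt u' (u'' y) y) {x : ℝ}
    (hcont : ContinuousAt u'' x) :
    (fun ξ => secondCentralDiff u x ξ - u'' x * ξ ^ 2) =o[𝓝[>] 0] fun ξ => ξ ^ 2 := by
  refine IsLittleO.of_bound fun c hc => ?_
  obtain ⟨δ, hδ, hu''⟩ := Metric.continuousAt_iff.1 hcont c hc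
  filter_upwards [Ioo_mem_nhdsGT hδ] with ξ hξ
  rw [Real.norm_eq_abs, norm_pow, Real.norm_eq_abs, sq_abs]
  refine abs_secondCentralDiff_sub_mul_sq_le hd1 hd2 hξ.1.le fun s hs => (hu'' ?_).le
  rw [Real.dist_eq, add_sub_cancel_left]
  exact hs.trans_lt hξ.2

theorem abs_secondCentralDiff_le {u : ℝ → ℝ} {B : ℝ} (hB : ∀ y, |u y| ≤ B) (x ξ : ℝ) :
    |secondCentralDiff u x ξ| ≤ 4 * B := by
  have h₁ := abs_le.1 (hB (x + ξ))
  have h₂ := abs_le.1 (hB x)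
  have h₃ := abs_le.1 (hB (x - ξ))
  rw [secondCentralDiff, abs_le]
  constructor <;> linarith

theorem stmt18_general (u u' u'' : ℝ → ℝ)
    (hd1 : ∀ y, HasDerivAt u (u' y) y) (hd2 : ∀ y, HasDerivAt u' (u'' y) y)
    (hbd : ∃ B : ℝ, ∀ y, |u y| ≤ B)
    (x : ℝ) (hcont : ContinuousAt u'' x) :
    Filter.Tendsto (fun α : ℝ =>
        fracLapConst α *
          ∫ ξ in Set.Ioi (0:ℝ), (u (x + ξ) - 2 * u x + u (x - ξ)) * ξ ^ (-(1 + α)))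
      (nhdsWithin 2 (Set.Iio 2)) (nhds (u'' x)) ∧
    Filter.Tendsto (fun α : ℝ =>
        -(fracLapConst α *
          ∫ ξ in Set.Ioi (0:ℝ), (u (x + ξ) - 2 * u x + u (x - ξ)) * ξ ^ (-(1 + α))))
      (nhdsWithin 2 (Set.Iio 2)) (nhds (-u'' x)) := by
  obtain ⟨B, hB⟩ := hbd
  have hu : Continuous u := continuous_iff_continuousAt.2 fun y => (hd1 y).continuousAt
  have hJ : Tendsto (fun α => (2 - α) * ∫ ξ in Ioi 0, secondCentralDiff u x ξ * ξ ^ (-(1 + α)))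
      (𝓝[<] 2) (𝓝 (u'' x)) :=
    tendsto_two_sub_mul_integral_mul_rpow (by unfold secondCentralDiff; fun_prop)
      (fun ξ _ => abs_secondCentralDiff_le hB x ξ)
      (isLittleO_secondCentralDiff_sub_mul_sq hd1 hd2 hcont)
  have hc : Tendsto (fun α => fracLapConst α / (2 - α)) (𝓝[<] 2) (𝓝 1) :=
    tendsto_fracLapConst_div_two_sub.mono_left (nhdsWithin_mono 2 fun _ hα => ne_of_lt hα)
  have hlim : Tendsto (fun α => fracLapConst α *
      ∫ ξ in Ioi 0, secondCentralDiff u x ξ * ξ ^ (-(1 + α))) (𝓝[<] 2) (𝓝 (u'' x)) := by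
    refine (one_mul (u'' x) ▸ hc.mul hJ).congr' ?_
    filter_upwards [self_mem_nhdsWithin] with α (hα : α < 2)
    have : 2 - α ≠ 0 := sub_ne_zero.2 hα.ne'
    field_simp
  exact ⟨hlim, hlim.neg⟩

/-- If `u : ℝ → ℝ` is twice differentiable with `u` and `u''` bounded, and `u''` is
continuous at `x`, then `c_{1,α} ∫_0^∞ δ²u(x,ξ) ξ^{−(1+α)} dξ → u''(x)` as `α → 2⁻`;
in particular the fractional Laplacian of `u` at `x` converges to `−u''(x)`. -/
theorem stmt18 (u u' u'' : ℝ → ℝ)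
    (hd1 : ∀ y, HasDerivAt u (u' y) y) (hd2 : ∀ y, HasDerivAt u' (u'' y) y)
    (hbd : ∃ B : ℝ, ∀ y, |u y| ≤ B) (hbd2 : ∃ B₂ : ℝ, ∀ y, |u'' y| ≤ B₂)
    (x : ℝ) (hcont : ContinuousAt u'' x) :
    Filter.Tendsto (fun α : ℝ =>
        fracLapConst α *
          ∫ ξ in Set.Ioi (0:ℝ), (u (x + ξ) - 2 * u x + u (x - ξ)) * ξ ^ (-(1 + α)))
      (nhdsWithin 2 (Set.Iio 2)) (nhds (u'' x)) ∧
    Filter.Tendsto (fun α : ℝ =>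
        -(fracLapConst α *
          ∫ ξ in Set.Ioi (0:ℝ), (u (x + ξ) - 2 * u x + u (x - ξ)) * ξ ^ (-(1 + α))))
      (nhdsWithin 2 (Set.Iio 2)) (nhds (-u'' x)) :=
  stmt18_general u u' u'' hd1 hd2 hbd x hcont
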